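/- arXiv:2603.18483 — 7 statements merged into one kernel-verified Lean document; each statement's English description precedes it below -/
import Mathlib

section
/- If Σ + Σ_z is invertible, the matrix W = (Σ + Σ_z)^{-1} Σ minimizes the function E(W) = Tr((W^T - I) Σ (W^T - I)^T) + Tr(W^T Σ_z W) over all d×d real matrices W. -/
/-!
Since `Σ` is symmetric, `E(W) = Tr(Wᵀ A W) - 2 Tr(Σ W) + Tr Σ` with `A = Σ + Σ_z`.
The Wiener filter `W₀` solves the normal equation `A W₀ = Σ`, so completing the square gives
`E(W) = E(W₀) + Tr((W - W₀)ᵀ A (W - W₀))`, and the last term is nonnegative because `A` is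
positive semidefinite.
-/

open Matrix

namespace Matrix

variable {n : Type*} [Fintype n]

theorem trace_transpose_mul_mul_self_nonneg {A : Matrix n n ℝ} (hA : A.PosSemidef)
    (X : Matrix n n ℝ) : 0 ≤ trace (Xᵀ * A * X) := by
  simpa using (hA.conjTranspose_mul_mul_same X).trace_nonneg

theorem trace_quadratic_eq_add_of_mul_eq {A B W₀ : Matrix n n ℝ} (hA : A.IsSymm)
    (hW₀ : A * W₀ = B) (W : Matrix n n ℝ) :
    trace (Wᵀ * A * W) - 2 * trace (Bᵀ * W)
      = trace (W₀ᵀ * A * W₀) - 2 * trace (Bᵀ * W₀) + trace ((W - W₀)ᵀ * A * (W - W₀)) := by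
  have hcross₁ : trace (Wᵀ * A * W₀) = trace (Bᵀ * W) := by
    rw [mul_assoc, hW₀, ← trace_transpose, transpose_mul, transpose_transpose]
  have hcross₂ : trace (W₀ᵀ * A * W) = trace (Bᵀ * W) := by
    rw [← hW₀, transpose_mul, hA.eq]
  have hdiag : trace (W₀ᵀ * A * W₀) = trace (Bᵀ * W₀) := by
    rw [← hW₀, transpose_mul, hA.eq]
  simp only [transpose_sub, sub_mul, mul_sub, trace_sub]
  linarith

theorem trace_quadratic_le_of_mul_eq {A B W₀ : Matrix n n ℝ} (hA : A.PosSemidef)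
    (hW₀ : A * W₀ = B) (W : Matrix n n ℝ) :
    trace (W₀ᵀ * A * W₀) - 2 * trace (Bᵀ * W₀) ≤ trace (Wᵀ * A * W) - 2 * trace (Bᵀ * W) := by
  rw [trace_quadratic_eq_add_of_mul_eq (isHermitian_iff_isSymm.mp hA.isHermitian) hW₀ W]
  linarith [trace_transpose_mul_mul_self_nonneg hA (W - W₀)]

variable [DecidableEq n]

theorem trace_wiener_error_eq {S : Matrix n n ℝ} (hS : S.IsSymm) (Sz W : Matrix n n ℝ) :
    trace ((Wᵀ - 1) * S * (Wᵀ - 1)ᵀ) + trace (Wᵀ * Sz * W)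
      = trace (Wᵀ * (S + Sz) * W) - 2 * trace (Sᵀ * W) + trace S := by
  have hleft : trace (Wᵀ * S) = trace (Sᵀ * W) := by
    rw [← trace_transpose, transpose_mul, transpose_transpose]
  have hright : trace (S * W) = trace (Sᵀ * W) := by rw [hS.eq]
  simp only [transpose_sub, transpose_one, transpose_transpose, sub_mul, mul_sub, one_mul,
    mul_one, mul_add, add_mul, trace_sub, trace_add]
  linarith

end Matrix

/-- If `S + Sz` is invertible, the Wiener filter `W = (S + Sz)⁻¹ S` minimizes
`E(W) = Tr((Wᵀ - I) S (Wᵀ - I)ᵀ) + Tr(Wᵀ Sz W)` over all `d×d` real matrices. -/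
theorem wiener_filter_minimizes
    (d : ℕ) (S Sz : Matrix (Fin d) (Fin d) ℝ)
    (hS : S.PosSemidef) (hSz : Sz.PosSemidef)
    (hinv : IsUnit (S + Sz)) :
    ∀ W : Matrix (Fin d) (Fin d) ℝ,
      Matrix.trace (((((S + Sz)⁻¹ * S)ᵀ) - 1) * S * ((((S + Sz)⁻¹ * S)ᵀ) - 1)ᵀ)
        + Matrix.trace ((((S + Sz)⁻¹ * S)ᵀ) * Sz * ((S + Sz)⁻¹ * S))
      ≤ Matrix.trace ((Wᵀ - 1) * S * (Wᵀ - 1)ᵀ) + Matrix.trace (Wᵀ * Sz * W) := by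
  intro W
  have hnormal : (S + Sz) * ((S + Sz)⁻¹ * S) = S :=
    mul_nonsing_inv_cancel_left (A := S + Sz) S ((isUnit_iff_isUnit_det _).mp hinv)
  have hSsymm : S.IsSymm := isHermitian_iff_isSymm.mp hS.isHermitian
  rw [trace_wiener_error_eq hSsymm, trace_wiener_error_eq hSsymm]
  linarith [trace_quadratic_le_of_mul_eq (hS.add hSz) hnormal W]
end

section
/- Let E(σ) = c·d·(1 + ((d(c+c_z)/(n-d)) - 2c)σ + c·c_z - c^2) / (c+σ)^2) (equivalently, E(σ) = c d + c d · [((d(c+c_z)/(n-d)) - 2c)σ + c c_z - c^2]/(c+σ)^2 ). If (3-2κ)c + c_z < 0 and c + (3-2κ)c_z < 0, where κ = n/d, then the minimizer of E over σ ≥ 0 is σ* = c(c + (3-2κ)c_z)/((3-2κ)c + c_z) and σ* > 0. -/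
set_option maxHeartbeats 1000000


/-- In region II (`(3-2κ)c + c_z < 0` and `c + (3-2κ)c_z < 0` with `κ = n/d`), the
minimizer over `σ ≥ 0` of the scalar generalization error
`E(σ) = cd + cd·[((d(c+c_z)/(n-d)) - 2c)σ + c c_z - c²]/(c+σ)²`
is `σ* = c(c + (3-2κ)c_z)/((3-2κ)c + c_z)`, and `σ* > 0`. -/
theorem scalar_error_minimizer
    (n d : ℕ) (hd : 0 < d) (hnd : d < n)
    (c cz : ℝ) (hc : 0 < c) (hcz : 0 < cz)
    (κ : ℝ) (hκ : κ = (n : ℝ) / d)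
    (E : ℝ → ℝ)
    (hE : ∀ σ : ℝ, E σ = c * d + c * d *
      ((((d : ℝ) * (c + cz) / ((n : ℝ) - d)) - 2 * c) * σ + c * cz - c ^ 2)
        / (c + σ) ^ 2)
    (h1 : (3 - 2 * κ) * c + cz < 0) (h2 : c + (3 - 2 * κ) * cz < 0) :
    (0 < c * (c + (3 - 2 * κ) * cz) / ((3 - 2 * κ) * c + cz))
    ∧ ∀ σ : ℝ, 0 ≤ σ →
        E (c * (c + (3 - 2 * κ) * cz) / ((3 - 2 * κ) * c + cz)) ≤ E σ := by
  have hd' : (0:ℝ) < d := by exact_mod_cast hd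
  have hnd' : (d:ℝ) < n := by exact_mod_cast hnd
  have hk1 : (0:ℝ) < κ - 1 := by
    have : 1 < κ := by rw [hκ]; exact (one_lt_div hd').mpr hnd'
    linarith
  have hkne : κ - 1 ≠ 0 := ne_of_gt hk1
  have hccz : 0 < c + cz := by linarith
  have hk2 : 2 < κ := by nlinarith
  have hDne : (3 - 2 * κ) * c + cz ≠ 0 := ne_of_lt h1
  obtain ⟨A, hAdef⟩ : ∃ A : ℝ, A = ((3 - 2 * κ) * c + cz) / (κ - 1) := ⟨_, rfl⟩
  have hA : A < 0 := hAdef ▸ div_neg_of_neg_of_pos h1 hk1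
  have hAne : A ≠ 0 := ne_of_lt hA
  have hnd0 : (n:ℝ) - d = d * (κ - 1) := by
    rw [hκ]; field_simp
  have hAeq : (d:ℝ) * (c + cz) / ((n:ℝ) - d) - 2 * c = A := by
    rw [hnd0, hAdef]
    field_simp
    ring
  have hAcB : A * c - (c * cz - c ^ 2) < 0 := by
    have h : A * c - (c * cz - c ^ 2) = (c * ((2 - κ) * (c + cz))) / (κ - 1) := by
      rw [hAdef]; field_simp; ring
    rw [h]
    apply div_neg_of_neg_of_pos _ hk1
    nlinarith
  set s : ℝ := c * (c + (3 - 2 * κ) * cz) / ((3 - 2 * κ) * c + cz) with hsdef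
  have hspos : 0 < s := div_pos_of_neg_of_neg (mul_neg_of_pos_of_neg hc h2) h1
  have hs2 : s = (A * c - 2 * (c * cz - c ^ 2)) / A := by
    rw [hsdef, hAdef]; field_simp; ring
  have hcs : c + s = 2 * (A * c - (c * cz - c ^ 2)) / A := by
    rw [hs2]; field_simp; ring
  have hcspos : 0 < c + s := by
    rw [hcs]
    exact div_pos_of_neg_of_neg (by linarith) hA
  refine ⟨hspos, fun σ hσ => ?_⟩
  rw [hE, hE]
  have hcσ : 0 < c + σ := by linarith
  have hBApos : 0 < 4 * ((c * cz - c ^ 2) - A * c) := by linarith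
  have hAcBne : A * c - (c * cz - c ^ 2) ≠ 0 := ne_of_lt hAcB
  have hnum : A * s + c * cz - c ^ 2 = A * c - (c * cz - c ^ 2) := by
    rw [hs2]; field_simp; ring
  have hLHS : (A * s + c * cz - c ^ 2) / (c + s) ^ 2
      = A ^ 2 / (4 * (A * c - (c * cz - c ^ 2))) := by
    rw [hnum, hcs, div_pow]
    rw [div_eq_div_iff (by positivity) (by simpa using mul_ne_zero (by norm_num : (4:ℝ) ≠ 0) hAcBne)]
    field_simp
    ring
  have key : (A * s + c * cz - c ^ 2) / (c + s) ^ 2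
      ≤ (A * σ + c * cz - c ^ 2) / (c + σ) ^ 2 := by
    rw [hLHS]
    have hid : (A * σ + c * cz - c ^ 2) / (c + σ) ^ 2
        - A ^ 2 / (4 * (A * c - (c * cz - c ^ 2)))
        = (A * (σ - c) + 2 * (c * cz - c ^ 2)) ^ 2
          / ((4 * ((c * cz - c ^ 2) - A * c)) * (c + σ) ^ 2) := by
      rw [div_sub_div _ _ (by positivity) (by simpa using mul_ne_zero (by norm_num : (4:ℝ) ≠ 0) hAcBne)]
      rw [div_eq_div_iff (by simp [mul_ne_zero, hAcBne]; positivity) (by positivity)]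
      ring
    have hnn : 0 ≤ (A * (σ - c) + 2 * (c * cz - c ^ 2)) ^ 2
          / ((4 * ((c * cz - c ^ 2) - A * c)) * (c + σ) ^ 2) :=
      div_nonneg (sq_nonneg _) (by positivity)
    linarith [hid ▸ hnn]
  rw [hAeq]
  have hcd : (0:ℝ) ≤ c * d := le_of_lt (mul_pos hc hd')
  have := mul_le_mul_of_nonneg_left key hcd
  calc c * ↑d + c * ↑d * (A * s + c * cz - c ^ 2) / (c + s) ^ 2
      = c * ↑d + c * ↑d * ((A * s + c * cz - c ^ 2) / (c + s) ^ 2) := by ring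
    _ ≤ c * ↑d + c * ↑d * ((A * σ + c * cz - c ^ 2) / (c + σ) ^ 2) := by linarith
    _ = c * ↑d + c * ↑d * (A * σ + c * cz - c ^ 2) / (c + σ) ^ 2 := by ring
end

section
/- Let κ > 1 and c, c_z > 0 with (3-2κ)c + c_z < 0 and c + (3-2κ)c_z < 0. Define σ* = c(c + (3-2κ)c_z)/((3-2κ)c + c_z). Then the function f(σ) = 1 + [((c+c_z)/(κ-1) - 2c)σ + c c_z - c^2]/(c+σ)^2, evaluated at σ = σ*, equals (-(c+c_z)^2 + 4(κ-1)^2 c c_z) / (4(κ-2)(κ-1)(c+c_z)·c). -/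
/-!
The two inequalities defining region II force `κ > 2`, so every denominator is nonzero and the
claim is a rational-function identity. It collapses once one notes
`c + σ* = 2c(2 - κ)(c + c_z) / ((3 - 2κ)c + c_z)`.
-/

namespace RegionII

noncomputable def perCoordError (κ c cz σ : ℝ) : ℝ :=
  1 + (((c + cz) / (κ - 1) - 2 * c) * σ + c * cz - c ^ 2) / (c + σ) ^ 2

noncomputable def optimalNoise (κ c cz : ℝ) : ℝ :=
  c * (c + (3 - 2 * κ) * cz) / ((3 - 2 * κ) * c + cz)

/-- Adding the two defining inequalities of region II gives `(4 - 2κ)(c + c_z) < 0`. -/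
theorem two_lt_kappa {κ c cz : ℝ} (hc : 0 < c) (hcz : 0 < cz)
    (h1 : (3 - 2 * κ) * c + cz < 0) (h2 : c + (3 - 2 * κ) * cz < 0) : 2 < κ := by
  nlinarith

theorem c_add_optimalNoise {κ c cz : ℝ} (hD : (3 - 2 * κ) * c + cz ≠ 0) :
    c + optimalNoise κ c cz = 2 * c * (2 - κ) * (c + cz) / ((3 - 2 * κ) * c + cz) := by
  unfold optimalNoise
  rw [eq_div_iff hD, add_mul, div_mul_cancel₀ _ hD]
  ring

theorem perCoordError_optimalNoise {κ c cz : ℝ} (hκ₁ : κ - 1 ≠ 0) (hκ₂ : κ - 2 ≠ 0) (hc : c ≠ 0)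
    (hccz : c + cz ≠ 0) (hD : (3 - 2 * κ) * c + cz ≠ 0) :
    perCoordError κ c cz (optimalNoise κ c cz)
      = (-(c + cz) ^ 2 + 4 * (κ - 1) ^ 2 * c * cz) / (4 * (κ - 2) * (κ - 1) * (c + cz) * c) := by
  have h2κ : 2 - κ ≠ 0 := by rwa [← neg_sub, neg_ne_zero]
  rw [perCoordError, c_add_optimalNoise hD, optimalNoise]
  -- keep `D` opaque so that `field_simp` can use `hD` instead of expanding the denominator
  set D := (3 - 2 * κ) * c + cz with hD_def
  field_simp
  rw [hD_def]
  ring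

end RegionII

open RegionII in
theorem region_II_optimal_value_general
    (κ c cz : ℝ) (hc : 0 < c) (hcz : 0 < cz)
    (h1 : (3 - 2 * κ) * c + cz < 0) (h2 : c + (3 - 2 * κ) * cz < 0) :
    (1 + (((c + cz) / (κ - 1) - 2 * c)
        * (c * (c + (3 - 2 * κ) * cz) / ((3 - 2 * κ) * c + cz))
        + c * cz - c ^ 2)
      / (c + c * (c + (3 - 2 * κ) * cz) / ((3 - 2 * κ) * c + cz)) ^ 2)
    = (-(c + cz) ^ 2 + 4 * (κ - 1) ^ 2 * c * cz)
        / (4 * (κ - 2) * (κ - 1) * (c + cz) * c) := by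
  have hκ : 2 < κ := two_lt_kappa hc hcz h1 h2
  exact perCoordError_optimalNoise (by linarith : (0 : ℝ) < κ - 1).ne' (sub_pos.mpr hκ).ne'
    hc.ne' (by positivity) h1.ne

/-- In region II, the per-coordinate error
`f(σ) = 1 + [((c+c_z)/(κ-1) - 2c)σ + c c_z - c²]/(c+σ)²`
evaluated at `σ* = c(c + (3-2κ)c_z)/((3-2κ)c + c_z)` equals
`(-(c+c_z)² + 4(κ-1)² c c_z)/(4(κ-2)(κ-1)(c+c_z)·c)`. -/
theorem region_II_optimal_value
    (κ c cz : ℝ) (hκ : 1 < κ) (hc : 0 < c) (hcz : 0 < cz)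
    (h1 : (3 - 2 * κ) * c + cz < 0) (h2 : c + (3 - 2 * κ) * cz < 0) :
    (1 + (((c + cz) / (κ - 1) - 2 * c)
        * (c * (c + (3 - 2 * κ) * cz) / ((3 - 2 * κ) * c + cz))
        + c * cz - c ^ 2)
      / (c + c * (c + (3 - 2 * κ) * cz) / ((3 - 2 * κ) * c + cz)) ^ 2)
    = (-(c + cz) ^ 2 + 4 * (κ - 1) ^ 2 * c * cz)
        / (4 * (κ - 2) * (κ - 1) * (c + cz) * c) :=
  region_II_optimal_value_general κ c cz hc hcz h1 h2
end

section
/- Let κ > 1, c, c_z > 0, and f(σ) = 1 + [((c+c_z)/(κ-1) - 2c)σ + c c_z - c^2]/(c+σ)^2 for σ ≥ 0. If (3-2κ)c + c_z > 0 and c + (3-2κ)c_z > 0 and c_z < c, then the infimum of f over σ ≥ 0 is attained at σ = 0 and c·f(0) = c_z. -/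
/-- Phase region I: if `(3-2κ)c + c_z > 0`, `c + (3-2κ)c_z > 0` and `c_z < c`, the
infimum over `σ ≥ 0` of `f(σ) = 1 + [((c+c_z)/(κ-1) - 2c)σ + c c_z - c²]/(c+σ)²`
is attained at `σ = 0`, and `c·f(0) = c_z`. -/
theorem region_I_min_at_zero
    (κ c cz : ℝ) (hκ : 1 < κ) (hc : 0 < c) (hcz : 0 < cz)
    (f : ℝ → ℝ)
    (hf : ∀ σ : ℝ, f σ = 1 + (((c + cz) / (κ - 1) - 2 * c) * σ + c * cz - c ^ 2)
      / (c + σ) ^ 2)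
    (h1 : 0 < (3 - 2 * κ) * c + cz) (h2 : 0 < c + (3 - 2 * κ) * cz)
    (h3 : cz < c) :
    (∀ σ : ℝ, 0 ≤ σ → f 0 ≤ f σ) ∧ c * f 0 = cz := by
  have hκ1 : (0:ℝ) < κ - 1 := by linarith
  constructor
  · intro σ hσ
    have hcσ : (0:ℝ) < c + σ := by linarith
    rw [hf, hf]
    have key : ((((c + cz) / (κ - 1) - 2 * c) * 0 + c * cz - c ^ 2) / (c + 0) ^ 2)
        ≤ (((c + cz) / (κ - 1) - 2 * c) * σ + c * cz - c ^ 2) / (c + σ) ^ 2 := by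
      rw [div_le_div_iff₀ (by positivity) (by positivity)]
      have ht : 2 * cz ≤ (c + cz) / (κ - 1) := by
        rw [le_div_iff₀ hκ1]; nlinarith
      have h4 : 0 ≤ σ * ((c + cz) / (κ - 1) - 2 * cz) :=
        mul_nonneg hσ (by linarith)
      have h5 : 0 ≤ σ * σ * (c - cz) :=
        mul_nonneg (mul_nonneg hσ hσ) (by linarith)
      nlinarith [mul_nonneg (mul_nonneg hc.le hc.le) h4, mul_nonneg hc.le h5]
    linarith
  · rw [hf]
    field_simp
    ring
end

section
/- Let κ > 1, c, c_z > 0, and f(σ) = 1 + [((c+c_z)/(κ-1) - 2c)σ + c c_z - c^2]/(c+σ)^2 for σ ≥ 0. If (3-2κ)c + c_z > 0 and c + (3-2κ)c_z > 0 and c_z > c, then the infimum of f over σ ≥ 0 equals 1 (approached as σ → ∞), so the optimal generalization error c·inf f equals c. -/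
/-- Phase region III: if `(3-2κ)c + c_z > 0`, `c + (3-2κ)c_z > 0` and `c_z > c`, the
infimum over `σ ≥ 0` of `f(σ) = 1 + [((c+c_z)/(κ-1) - 2c)σ + c c_z - c²]/(c+σ)²`
equals `1`, approached as `σ → ∞`, so the optimal generalization error is `c·1 = c`. -/
theorem region_III_inf_one
    (κ c cz : ℝ) (hκ : 1 < κ) (hc : 0 < c) (hcz : 0 < cz)
    (f : ℝ → ℝ)
    (hf : ∀ σ : ℝ, f σ = 1 + (((c + cz) / (κ - 1) - 2 * c) * σ + c * cz - c ^ 2)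
      / (c + σ) ^ 2)
    (h1 : 0 < (3 - 2 * κ) * c + cz) (h2 : 0 < c + (3 - 2 * κ) * cz)
    (h3 : c < cz) :
    IsGLB {y : ℝ | ∃ σ : ℝ, 0 ≤ σ ∧ y = f σ} 1
    ∧ Filter.Tendsto f Filter.atTop (nhds 1)
    ∧ c * 1 = c := by
  have hκ1 : (0:ℝ) < κ - 1 := by linarith
  set A : ℝ := (c + cz) / (κ - 1) - 2 * c with hA
  have hApos : 0 < A := by
    rw [hA, sub_pos, lt_div_iff₀ hκ1]; nlinarith
  -- tendsto
  have hginv : Filter.Tendsto (fun σ : ℝ => (c + σ)⁻¹) Filter.atTop (nhds 0) :=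
    tendsto_inv_atTop_zero.comp (Filter.tendsto_atTop_add_const_left _ c Filter.tendsto_id)
  have htend : Filter.Tendsto f Filter.atTop (nhds 1) := by
    have heq : ∀ᶠ σ : ℝ in Filter.atTop,
        (1 + A * (c + σ)⁻¹ + (c * cz - c ^ 2 - A * c) * ((c + σ)⁻¹) ^ 2) = f σ := by
      filter_upwards [Filter.eventually_ge_atTop (0:ℝ)] with σ hσ
      have hne : c + σ ≠ 0 := by positivity
      rw [hf]; field_simp; ring
    have : Filter.Tendsto
        (fun σ : ℝ => 1 + A * (c + σ)⁻¹ + (c * cz - c ^ 2 - A * c) * ((c + σ)⁻¹) ^ 2)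
        Filter.atTop (nhds (1 + A * 0 + (c * cz - c ^ 2 - A * c) * 0 ^ 2)) := by
      exact ((tendsto_const_nhds.add (tendsto_const_nhds.mul hginv)).add
        (tendsto_const_nhds.mul (hginv.pow 2)))
    simpa using this.congr' heq
  have hlb : ∀ σ : ℝ, 0 ≤ σ → 1 ≤ f σ := by
    intro σ hσ
    rw [hf]
    have hden : (0:ℝ) < (c + σ) ^ 2 := by positivity
    have hnum : 0 ≤ A * σ + c * cz - c ^ 2 := by nlinarith
    nlinarith [div_nonneg hnum hden.le]
  refine ⟨⟨?_, ?_⟩, htend, mul_one c⟩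
  · rintro y ⟨σ, hσ, rfl⟩
    exact hlb σ hσ
  · intro b hb
    refine ge_of_tendsto htend ?_
    filter_upwards [Filter.eventually_ge_atTop (0:ℝ)] with σ hσ
    exact hb ⟨σ, hσ, rfl⟩
end

section
/- In region II, defined by (3-2κ)c + c_z < 0 and c + (3-2κ)c_z < 0 with κ > 1 and c, c_z > 0, the optimal error value (-(c+c_z)^2 + 4(κ-1)^2 c c_z) / (4(κ-2)(κ-1)(c+c_z)) is strictly less than min{c, c_z}. -/
/-- In region II, the optimal error `(-(c+c_z)² + 4(κ-1)² c c_z)/(4(κ-2)(κ-1)(c+c_z))`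
is strictly less than `min{c, c_z}`. -/
theorem region_II_beats_trivial
    (κ c cz : ℝ) (hκ : 1 < κ) (hc : 0 < c) (hcz : 0 < cz)
    (h1 : (3 - 2 * κ) * c + cz < 0) (h2 : c + (3 - 2 * κ) * cz < 0) :
    (-(c + cz) ^ 2 + 4 * (κ - 1) ^ 2 * c * cz)
        / (4 * (κ - 2) * (κ - 1) * (c + cz)) < min c cz := by
  have ha : cz < (2 * κ - 3) * c := by nlinarith
  have hb : c < (2 * κ - 3) * cz := by nlinarith
  have ht : 0 < 2 * κ - 3 := by nlinarith [mul_pos hc hcz]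
  have hκ2 : 2 < κ := by nlinarith [mul_pos hc hcz, mul_lt_mul_of_pos_left ha ht]
  have hD : 0 < 4 * (κ - 2) * (κ - 1) * (c + cz) := by
    have h3 := add_pos hc hcz
    have : (0:ℝ) < κ - 2 := by linarith
    have : (0:ℝ) < κ - 1 := by linarith
    positivity
  rw [lt_min_iff]
  constructor <;> rw [div_lt_iff₀ hD]
  · nlinarith [mul_pos (sub_pos.2 ha) (sub_pos.2 ha)]
  · nlinarith [mul_pos (sub_pos.2 hb) (sub_pos.2 hb)]
end

section
/- Let Σ, Σ_1, Σ_z be symmetric positive definite d×d matrices and n > d. Define G(Σ_1) = (1 + (1/(n-d)) Tr[(Σ+Σ_1)^{-1}(Σ+Σ_z)]) (Tr[Σ] - Tr[(Σ+Σ_1)^{-1}Σ^2]) + Tr[(Σ+Σ_1)^{-1}(Σ_z - Σ_1)(Σ+Σ_1)^{-1}Σ^2]. Then G(Σ_z) = (n/(n-d))(Tr[Σ] - Tr[(Σ+Σ_z)^{-1}Σ^2]) when Σ and Σ_z commute, and in particular G(Σ_z) ≥ Tr[Σ] - Tr[(Σ+Σ_z)^{-1}Σ^2], with equality iff Tr[Σ]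 = Tr[(Σ+Σ_z)^{-1}Σ^2]. -/
/-!
At `Σ₁ = Σ_z` the correction term vanishes and `Tr[(Σ+Σ_z)⁻¹(Σ+Σ_z)] = d`, so
`G(Σ_z) = (1 + d/(n-d)) W = n/(n-d) W` with `W` the Wiener error. Matrix inversion is antitone in
the Loewner order, so `Σ ≤ Σ+Σ_z` gives `(Σ+Σ_z)⁻¹ ≤ Σ⁻¹`; conjugating by `Σ` and taking traces
yields `W ≥ 0`. Since `n/(n-d) > 1` as soon as `d > 0`, equality `G(Σ_z) = W` forces `W = 0`.
-/

open Matrix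

namespace Matrix

variable {n K : Type*} [Fintype n] [DecidableEq n]
  [Field K] [PartialOrder K] [StarRing K] [StarOrderedRing K]

/-- Both sides are Schur complements of the block matrix `[[A, 1], [1, B⁻¹]]`. -/
theorem PosDef.posSemidef_inv_sub_inv {A B : Matrix n n K} (hA : A.PosDef) (hB : B.PosDef)
    (h : (A - B).PosSemidef) : (B⁻¹ - A⁻¹).PosSemidef := by
  let := hA.isUnit.invertible
  let := hB.isUnit.invertible
  let := hB.inv.isUnit.invertible
  have hblock : (fromBlocks A 1 (1 : Matrix n n K)ᴴ B⁻¹).PosSemidef := by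
    rwa [PosDef.fromBlocks₂₂ A 1 hB.inv, inv_inv_of_invertible, conjTranspose_one,
      Matrix.mul_one, Matrix.one_mul]
  simpa using (PosDef.fromBlocks₁₁ 1 B⁻¹ hA).mp hblock

theorem PosDef.trace_inv_add_mul_sq_le {S T : Matrix n n K} (hS : S.PosDef)
    (hT : T.PosSemidef) : trace ((S + T)⁻¹ * S ^ 2) ≤ trace S := by
  have hST := hS.add_posSemidef hT
  have hconj := ((hST.posSemidef_inv_sub_inv hS (by simpa using hT)).conjTranspose_mul_mul_same
    S).trace_nonneg
  rwa [hS.isHermitian.eq, Matrix.mul_sub, Matrix.sub_mul, trace_sub,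
    mul_nonsing_inv _ ((isUnit_iff_isUnit_det S).1 hS.isUnit), Matrix.one_mul, trace_mul_cycle,
    trace_mul_comm (S * S), ← sq, sub_nonneg] at hconj

end Matrix

theorem div_sub_mul_eq_self_iff {n d w : ℝ} (hd : d < n) :
    n / (n - d) * w = w ↔ d = 0 ∨ w = 0 := by
  have hnd : n - d ≠ 0 := (sub_pos.2 hd).ne'
  rw [← sub_eq_zero, ← sub_one_mul, div_sub_one hnd, sub_sub_cancel, mul_eq_zero,
    div_eq_zero_iff, or_iff_left hnd]

theorem G_at_sigma_z_general
    (d n : ℕ) (hnd : d < n)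
    (S Sz : Matrix (Fin d) (Fin d) ℝ)
    (hS : S.PosDef) (hSz : Sz.PosDef)
    (G : Matrix (Fin d) (Fin d) ℝ → ℝ)
    (hG : ∀ S₁ : Matrix (Fin d) (Fin d) ℝ,
      G S₁ = (1 + (1 / ((n : ℝ) - d)) * Matrix.trace ((S + S₁)⁻¹ * (S + Sz)))
          * (Matrix.trace S - Matrix.trace ((S + S₁)⁻¹ * S ^ 2))
        + Matrix.trace ((S + S₁)⁻¹ * (Sz - S₁) * (S + S₁)⁻¹ * S ^ 2)) :
    G Sz = ((n : ℝ) / ((n : ℝ) - d))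
        * (Matrix.trace S - Matrix.trace ((S + Sz)⁻¹ * S ^ 2))
    ∧ Matrix.trace S - Matrix.trace ((S + Sz)⁻¹ * S ^ 2) ≤ G Sz
    ∧ (G Sz = Matrix.trace S - Matrix.trace ((S + Sz)⁻¹ * S ^ 2)
        ↔ Matrix.trace S = Matrix.trace ((S + Sz)⁻¹ * S ^ 2)) := by
  set W := trace S - trace ((S + Sz)⁻¹ * S ^ 2)
  have hdn : (d : ℝ) < n := by exact_mod_cast hnd
  have hW : 0 ≤ W := sub_nonneg.2 (hS.trace_inv_add_mul_sq_le hSz.posSemidef)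
  have hGz : G Sz = n / (n - d) * W := by
    rw [hG Sz, nonsing_inv_mul _ ((isUnit_iff_isUnit_det _).1 (hS.add hSz).isUnit), trace_one,
      Fintype.card_fin, sub_self, Matrix.mul_zero, Matrix.zero_mul, Matrix.zero_mul, trace_zero,
      add_zero]
    field_simp [(sub_pos.2 hdn).ne']
    ring
  refine ⟨hGz, ?_, ?_⟩
  · rw [hGz]
    exact le_mul_of_one_le_left hW ((one_le_div (sub_pos.2 hdn)).2 (by simp))
  · rw [hGz, div_sub_mul_eq_self_iff hdn, ← sub_eq_zero (a := trace S)]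
    obtain rfl | hd := eq_or_ne d 0
    · simp [W, trace]
    · exact or_iff_right (Nat.cast_ne_zero.2 hd)

/-- For commuting positive definite `S`, `Sz` and `n > d`, the Theorem 1 error formula
`G(S₁)` evaluated at `S₁ = Sz` equals `n/(n-d)` times the Wiener error
`Tr[S] - Tr[(S+Sz)⁻¹S²]`; in particular `G(Sz)` is at least the Wiener error, with
equality iff `Tr[S] = Tr[(S+Sz)⁻¹S²]`. -/
theorem G_at_sigma_z
    (d n : ℕ) (hnd : d < n)
    (S Sz : Matrix (Fin d) (Fin d) ℝ)
    (hS : S.PosDef) (hSz : Sz.PosDef)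
    (hcomm : S * Sz = Sz * S)
    (G : Matrix (Fin d) (Fin d) ℝ → ℝ)
    (hG : ∀ S₁ : Matrix (Fin d) (Fin d) ℝ,
      G S₁ = (1 + (1 / ((n : ℝ) - d)) * Matrix.trace ((S + S₁)⁻¹ * (S + Sz)))
          * (Matrix.trace S - Matrix.trace ((S + S₁)⁻¹ * S ^ 2))
        + Matrix.trace ((S + S₁)⁻¹ * (Sz - S₁) * (S + S₁)⁻¹ * S ^ 2)) :
    G Sz = ((n : ℝ) / ((n : ℝ) - d))
        * (Matrix.trace S - Matrix.trace ((S + Sz)⁻¹ * S ^ 2))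
    ∧ Matrix.trace S - Matrix.trace ((S + Sz)⁻¹ * S ^ 2) ≤ G Sz
    ∧ (G Sz = Matrix.trace S - Matrix.trace ((S + Sz)⁻¹ * S ^ 2)
        ↔ Matrix.trace S = Matrix.trace ((S + Sz)⁻¹ * S ^ 2)) :=
  G_at_sigma_z_general d n hnd S Sz hS hSz G hG
end
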